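/- Let U ⊆ ℂ be a nonempty open set, u : U → ℂ holomorphic, and Ψ : U → M₂(ℂ) a holomorphic matrix-valued function, invertible at every point, satisfying Ψ'(z) = (σ₊ + u(z)·σ₋)·Ψ(z) on U. Then the matrix-valued function Λ₊(z) = Ψ(z)⁻¹·σ₊·Ψ(z) satisfies Λ₊(z) = −(1/2)·Λ₋''(z) + u(z)·Λ₋(z) for every z ∈ U, where Λ₋(z) = Ψ(z)⁻¹·σ₋·Ψ(z). -/

import Mathlib

/-!
Conjugation by a solution of `Ψ' = A Ψ` turns differentiation into a commutator:
`(Ψ⁻¹ M Ψ)' = Ψ⁻¹ (M A - A M) Ψ` for every constant matrix `M`. For `A = σ₊ + u σ₋` the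
commutator of `σ₋` with `A` is the constant `-σ₃`, so `Λ₋' = -Λ₃`, and differentiating once more,
`Λ₋'' = Ψ⁻¹ (-σ₃ A + A σ₃) Ψ = -2 Λ₊ + 2 u Λ₋`.
-/

open Matrix

noncomputable def sigmaPlus : Matrix (Fin 2) (Fin 2) ℂ := !![0, 1; 0, 0]
noncomputable def sigmaMinus : Matrix (Fin 2) (Fin 2) ℂ := !![0, 0; 1, 0]
noncomputable def sigma3 : Matrix (Fin 2) (Fin 2) ℂ := !![1, 0; 0, -1]

/-- Entrywise derivative of a matrix-valued function of a complex variable. -/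
noncomputable def mderiv (F : ℂ → Matrix (Fin 2) (Fin 2) ℂ) (z : ℂ) :
    Matrix (Fin 2) (Fin 2) ℂ :=
  Matrix.of fun i j => deriv (fun w => F w i j) z

lemma commutator_sigmaMinus_sigmaPlus_add_smul (c : ℂ) :
    sigmaMinus * (sigmaPlus + c • sigmaMinus) - (sigmaPlus + c • sigmaMinus) * sigmaMinus
      = -sigma3 := by
  ext i j
  fin_cases i <;> fin_cases j <;> simp [sigmaPlus, sigmaMinus, sigma3]

lemma commutator_neg_sigma3_sigmaPlus_add_smul (c : ℂ) :
    -sigma3 * (sigmaPlus + c • sigmaMinus) - (sigmaPlus + c • sigmaMinus) * -sigma3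
      = (-2 : ℂ) • sigmaPlus + (2 * c) • sigmaMinus := by
  ext i j
  fin_cases i <;> fin_cases j <;> simp [sigmaPlus, sigmaMinus, sigma3] <;> ring

section EntrywiseCalculus

variable {F G Ψ : ℂ → Matrix (Fin 2) (Fin 2) ℂ} {z : ℂ}

def EntrywiseDifferentiableAt (F : ℂ → Matrix (Fin 2) (Fin 2) ℂ) (z : ℂ) : Prop :=
  ∀ i j, DifferentiableAt ℂ (fun w => F w i j) z

lemma entrywiseDifferentiableAt_const (M : Matrix (Fin 2) (Fin 2) ℂ) :
    EntrywiseDifferentiableAt (fun _ => M) z :=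
  fun _ _ => differentiableAt_const _

lemma EntrywiseDifferentiableAt.mul (hF : EntrywiseDifferentiableAt F z)
    (hG : EntrywiseDifferentiableAt G z) : EntrywiseDifferentiableAt (fun w => F w * G w) z := by
  intro i j
  simp only [Matrix.mul_apply]
  exact DifferentiableAt.fun_sum fun k _ => (hF i k).mul (hG k j)

lemma EntrywiseDifferentiableAt.det (hΨ : EntrywiseDifferentiableAt Ψ z) :
    DifferentiableAt ℂ (fun w => (Ψ w).det) z := by
  simp only [Matrix.det_fin_two]
  exact ((hΨ 0 0).mul (hΨ 1 1)).sub ((hΨ 0 1).mul (hΨ 1 0))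

lemma EntrywiseDifferentiableAt.inv (hΨ : EntrywiseDifferentiableAt Ψ z)
    (hdet : IsUnit (Ψ z).det) : EntrywiseDifferentiableAt (fun w => (Ψ w)⁻¹) z := by
  have hdet_inv : DifferentiableAt ℂ (fun w => ((Ψ w).det)⁻¹) z := hΨ.det.inv hdet.ne_zero
  intro i j
  simp only [Matrix.inv_def, Ring.inverse_eq_inv', Matrix.smul_apply, smul_eq_mul,
    Matrix.adjugate_fin_two]
  fin_cases i <;> fin_cases j
  · exact hdet_inv.mul (hΨ 1 1)
  · exact hdet_inv.mul (hΨ 0 1).neg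
  · exact hdet_inv.mul (hΨ 1 0).neg
  · exact hdet_inv.mul (hΨ 0 0)

lemma Filter.EventuallyEq.mderiv_eq (h : F =ᶠ[nhds z] G) : mderiv F z = mderiv G z := by
  ext i j
  exact Filter.EventuallyEq.deriv_eq (h.mono fun w hw => congrFun (congrFun hw i) j)

lemma mderiv_const (M : Matrix (Fin 2) (Fin 2) ℂ) : mderiv (fun _ => M) z = 0 := by
  ext i j
  simp [mderiv]

lemma mderiv_mul (hF : EntrywiseDifferentiableAt F z) (hG : EntrywiseDifferentiableAt G z) :
    mderiv (fun w => F w * G w) z = mderiv F z * G z + F z * mderiv G z := by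
  ext i j
  simp only [mderiv, Matrix.of_apply, Matrix.add_apply, Matrix.mul_apply]
  rw [deriv_fun_sum (A := fun k w => F w i k * G w k j) fun k _ => (hF i k).mul (hG k j),
    ← Finset.sum_add_distrib]
  exact Finset.sum_congr rfl fun k _ => deriv_fun_mul (hF i k) (hG k j)

lemma mderiv_mul_const (hF : EntrywiseDifferentiableAt F z) (M : Matrix (Fin 2) (Fin 2) ℂ) :
    mderiv (fun w => F w * M) z = mderiv F z * M := by
  rw [mderiv_mul hF (entrywiseDifferentiableAt_const M), mderiv_const, mul_zero, add_zero]

lemma mderiv_inv (hΨ : EntrywiseDifferentiableAt Ψ z) (hdet : IsUnit (Ψ z).det) :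
    mderiv (fun w => (Ψ w)⁻¹) z = -((Ψ z)⁻¹ * mderiv Ψ z * (Ψ z)⁻¹) := by
  have hunit : ∀ᶠ w in nhds z, IsUnit (Ψ w).det := by
    filter_upwards [hΨ.det.continuousAt.eventually_ne hdet.ne_zero] with w hw using hw.isUnit
  have hprod : mderiv (fun w => (Ψ w)⁻¹ * Ψ w) z = 0 := by
    rw [Filter.EventuallyEq.mderiv_eq (G := fun _ => 1), mderiv_const]
    filter_upwards [hunit] with w hw using Matrix.nonsing_inv_mul _ hw
  rw [mderiv_mul (hΨ.inv hdet) hΨ] at hprod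
  calc mderiv (fun w => (Ψ w)⁻¹) z
      = mderiv (fun w => (Ψ w)⁻¹) z * (Ψ z * (Ψ z)⁻¹) := by
        rw [Matrix.mul_nonsing_inv _ hdet, mul_one]
    _ = (mderiv (fun w => (Ψ w)⁻¹) z * Ψ z + (Ψ z)⁻¹ * mderiv Ψ z) * (Ψ z)⁻¹
        - (Ψ z)⁻¹ * mderiv Ψ z * (Ψ z)⁻¹ := by noncomm_ring
    _ = -((Ψ z)⁻¹ * mderiv Ψ z * (Ψ z)⁻¹) := by rw [hprod, zero_mul, zero_sub]

lemma mderiv_inv_mul_mul (hΨ : EntrywiseDifferentiableAt Ψ z) (hdet : IsUnit (Ψ z).det)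
    {A : Matrix (Fin 2) (Fin 2) ℂ} (hODE : mderiv Ψ z = A * Ψ z) (M : Matrix (Fin 2) (Fin 2) ℂ) :
    mderiv (fun w => (Ψ w)⁻¹ * M * Ψ w) z = (Ψ z)⁻¹ * (M * A - A * M) * Ψ z := by
  rw [mderiv_mul ((hΨ.inv hdet).mul (entrywiseDifferentiableAt_const M)) hΨ,
    mderiv_mul_const (hΨ.inv hdet), mderiv_inv hΨ hdet, hODE]
  calc -((Ψ z)⁻¹ * (A * Ψ z) * (Ψ z)⁻¹) * M * Ψ z + (Ψ z)⁻¹ * M * (A * Ψ z)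
      = (Ψ z)⁻¹ * M * A * Ψ z - (Ψ z)⁻¹ * A * (Ψ z * (Ψ z)⁻¹) * M * Ψ z := by noncomm_ring
    _ = (Ψ z)⁻¹ * (M * A - A * M) * Ψ z := by
        rw [Matrix.mul_nonsing_inv _ hdet]; noncomm_ring

end EntrywiseCalculus

theorem lambdaPlus_eq_general
    (U : Set ℂ) (hU : IsOpen U)
    (u : ℂ → ℂ)
    (Ψ : ℂ → Matrix (Fin 2) (Fin 2) ℂ)
    (hΨ : ∀ i j, DifferentiableOn ℂ (fun w => Ψ w i j) U)
    (hinv : ∀ z ∈ U, IsUnit (Ψ z).det)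
    (hODE : ∀ z ∈ U, mderiv Ψ z = (sigmaPlus + u z • sigmaMinus) * Ψ z) :
    ∀ z ∈ U, (Ψ z)⁻¹ * sigmaPlus * Ψ z
      = (-(1/2) : ℂ) • mderiv (mderiv (fun w => (Ψ w)⁻¹ * sigmaMinus * Ψ w)) z
        + u z • ((Ψ z)⁻¹ * sigmaMinus * Ψ z) := by
  have hΨU : ∀ w ∈ U, EntrywiseDifferentiableAt Ψ w := fun w hw i j =>
    (hΨ i j).differentiableAt (hU.mem_nhds hw)
  have hconj := fun w (hw : w ∈ U) => mderiv_inv_mul_mul (hΨU w hw) (hinv w hw) (hODE w hw)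
  intro z hz
  have hΛ' : (fun w => mderiv (fun v => (Ψ v)⁻¹ * sigmaMinus * Ψ v) w)
      =ᶠ[nhds z] fun w => (Ψ w)⁻¹ * (-sigma3) * Ψ w := by
    filter_upwards [hU.mem_nhds hz] with w hw
    rw [hconj w hw, commutator_sigmaMinus_sigmaPlus_add_smul]
  have hΛ'' : mderiv (mderiv (fun w => (Ψ w)⁻¹ * sigmaMinus * Ψ w)) z
      = (Ψ z)⁻¹ * ((-2 : ℂ) • sigmaPlus + (2 * u z) • sigmaMinus) * Ψ z := by
    rw [hΛ'.mderiv_eq, hconj z hz, commutator_neg_sigma3_sigmaPlus_add_smul]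
  rw [hΛ'', Matrix.mul_add, Matrix.add_mul, Matrix.mul_smul, Matrix.smul_mul, Matrix.mul_smul,
    Matrix.smul_mul]
  module

/-- If `Ψ' = (σ₊ + u σ₋) Ψ` on a nonempty open set `U`, with `Ψ` holomorphic and invertible
at every point of `U`, then `Λ₊ = Ψ⁻¹ σ₊ Ψ` satisfies
`Λ₊ = -(1/2) Λ₋'' + u Λ₋` on `U`, where `Λ₋ = Ψ⁻¹ σ₋ Ψ`. -/
theorem lambdaPlus_eq
    (U : Set ℂ) (hU : IsOpen U) (hne : U.Nonempty)
    (u : ℂ → ℂ) (hu : DifferentiableOn ℂ u U)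
    (Ψ : ℂ → Matrix (Fin 2) (Fin 2) ℂ)
    (hΨ : ∀ i j, DifferentiableOn ℂ (fun w => Ψ w i j) U)
    (hinv : ∀ z ∈ U, IsUnit (Ψ z).det)
    (hODE : ∀ z ∈ U, mderiv Ψ z = (sigmaPlus + u z • sigmaMinus) * Ψ z) :
    ∀ z ∈ U, (Ψ z)⁻¹ * sigmaPlus * Ψ z
      = (-(1/2) : ℂ) • mderiv (mderiv (fun w => (Ψ w)⁻¹ * sigmaMinus * Ψ w)) z
        + u z • ((Ψ z)⁻¹ * sigmaMinus * Ψ z) :=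
  lambdaPlus_eq_general U hU u Ψ hΨ hinv hODE
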